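/- arXiv:2012.13500 — 2 statements merged into one kernel-verified Lean document; each statement's English description precedes it below -/
import Mathlib

section
/- Let s, t ≥ 1 and let G be the disjoint union of the complete graphs K_s and K_t. If r ≡ 1 (mod 4) with 3 ≤ r < s + t, then G is r-void: every subgraph of G induced by a selection of r vertices has an even number of edges. -/
/-!
If `a` of the `r` chosen vertices lie in `K_s` and `b` in `K_t`, they induce
`C(a,2) + C(b,2)` edges, and `C(a,2) + a*b + C(b,2) = C(r,2)`. For `r ≡ 1 (mod 4)` the number
`C(r,2) = r(r-1)/2` is even, and so is `a*b` because `a + b = r` is odd.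
-/

/-- The disjoint union `K_s ⊔ K_t`: two vertices of `Fin s ⊕ Fin t` are
adjacent exactly when they are distinct and lie in the same part. -/
def disjointUnionComplete (s t : ℕ) : SimpleGraph (Fin s ⊕ Fin t) :=
  SimpleGraph.fromRel (fun a b => a.isLeft = b.isLeft)

theorem Nat.add_choose_two (a b : ℕ) :
    (a + b).choose 2 = a.choose 2 + a * b + b.choose 2 := by
  rw [Nat.add_choose_eq,
    Finset.Nat.sum_antidiagonal_eq_sum_range_succ (fun i j => a.choose i * b.choose j)]
  simp only [Finset.sum_range_succ, Finset.sum_range_zero, Nat.reduceSub, Nat.choose_zero_right,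
    Nat.choose_one_right]
  ring

theorem Nat.even_choose_two_of_mod_four_eq_one {n : ℕ} (h : n % 4 = 1) : Even (n.choose 2) := by
  obtain ⟨k, rfl⟩ : ∃ k, n = 4 * k + 1 := ⟨n / 4, by omega⟩
  rw [Nat.choose_two_right, Nat.add_sub_cancel,
    show (4 * k + 1) * (4 * k) = 2 * ((4 * k + 1) * (2 * k)) by ring,
    Nat.mul_div_cancel_left _ two_pos]
  exact (even_two_mul k).mul_left _

theorem Nat.even_choose_two_add_choose_two {a b : ℕ} (h : (a + b) % 4 = 1) :
    Even (a.choose 2 + b.choose 2) := by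
  have hab : Even (a * b) := by
    rw [Nat.even_mul, Nat.even_iff, Nat.even_iff]
    omega
  have hsum := Nat.even_choose_two_of_mod_four_eq_one h
  rw [Nat.add_choose_two, add_right_comm, Nat.even_add] at hsum
  exact hsum.mpr hab

theorem Set.natCard_preimage_inl_add_natCard_preimage_inr {α β : Type*} [Finite α] [Finite β]
    (U : Set (α ⊕ β)) :
    Nat.card (Sum.inl ⁻¹' U) + Nat.card (Sum.inr ⁻¹' U) = Nat.card U := by
  rw [← Nat.card_sum]
  exact (Nat.card_congr Equiv.subtypeSum).symm

namespace SimpleGraph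

variable {V W : Type*}

def Iso.induceSum (G : SimpleGraph V) (H : SimpleGraph W) (U : Set (V ⊕ W)) :
    (G ⊕g H).induce U ≃g G.induce (Sum.inl ⁻¹' U) ⊕g H.induce (Sum.inr ⁻¹' U) where
  toEquiv := Equiv.subtypeSum
  map_rel_iff' := by
    rintro ⟨a | a, ha⟩ ⟨b | b, hb⟩ <;> simp [Equiv.subtypeSum]

theorem natCard_edgeSet_top [Finite V] :
    Nat.card (⊤ : SimpleGraph V).edgeSet = (Nat.card V).choose 2 := by
  classical
  have := Fintype.ofFinite V
  rw [Nat.card_eq_fintype_card, ← edgeFinset_card, card_edgeFinset_top_eq_card_choose_two,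
    Nat.card_eq_fintype_card]

theorem natCard_edgeSet_sum [Finite V] [Finite W] (G : SimpleGraph V) (H : SimpleGraph W) :
    Nat.card (G ⊕g H).edgeSet = Nat.card G.edgeSet + Nat.card H.edgeSet := by
  rw [Nat.card_congr edgeSetSumEquiv, Nat.card_sum]

theorem natCard_edgeSet_induce_top_sum_top [Finite V] [Finite W] (U : Set (V ⊕ W)) :
    Nat.card ((⊤ ⊕g ⊤ : SimpleGraph (V ⊕ W)).induce U).edgeSet =
      (Nat.card (Sum.inl ⁻¹' U)).choose 2 + (Nat.card (Sum.inr ⁻¹' U)).choose 2 := by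
  rw [Nat.card_congr (Iso.induceSum ⊤ ⊤ U).mapEdgeSet, natCard_edgeSet_sum, induce_top,
    induce_top, natCard_edgeSet_top, natCard_edgeSet_top]

end SimpleGraph

theorem disjointUnionComplete_eq_top_sum_top (s t : ℕ) :
    disjointUnionComplete s t = ⊤ ⊕g ⊤ := by
  ext (a | a) (b | b) <;> simp [disjointUnionComplete]

theorem disjointUnion_r_void_general (s t r : ℕ) (hrmod : r % 4 = 1) :
    ∀ U : Finset (Fin s ⊕ Fin t), U.card = r →
      Even (Nat.card ((disjointUnionComplete s t).induce
        (↑U : Set (Fin s ⊕ Fin t))).edgeSet) := by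
  intro U hU
  rw [disjointUnionComplete_eq_top_sum_top, SimpleGraph.natCard_edgeSet_induce_top_sum_top]
  apply Nat.even_choose_two_add_choose_two
  rw [Set.natCard_preimage_inl_add_natCard_preimage_inr, Nat.card_coe_set_eq,
    Set.ncard_coe_finset, hU, hrmod]

/-- for `s, t ≥ 1` and `r ≡ 1 (mod 4)` with `3 ≤ r < s + t`, the
graph `K_s ⊔ K_t` is `r`-void: every `r` vertices induce an even number of
edges. -/
theorem disjointUnion_r_void (s t r : ℕ) (hs : 1 ≤ s) (ht : 1 ≤ t)
    (hr : 3 ≤ r) (hrmod : r % 4 = 1) (hrst : r < s + t) :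
    ∀ U : Finset (Fin s ⊕ Fin t), U.card = r →
      Even (Nat.card ((disjointUnionComplete s t).induce
        (↑U : Set (Fin s ⊕ Fin t))).edgeSet) :=
  disjointUnion_r_void_general s t r hrmod
end

section
/- Let q ≥ 3 and s₁, s₂, s₃ ≥ 3, and let p ≥ 3. Suppose there exists a 3-coloring χ of the 2-element subsets of a p-element vertex set with colors {1, 2, 3} such that for each i ∈ {1, 2, 3} there is no s_i-element vertex set all of whose 2-element subsets receive color i. Then there exists a 5-coloring ψ of the 3-element subsets of a (q·p)-element vertex set with colors {1, 2, 3, 4, 5} such that: there is no (2s₁−1)-element vertex set all but at most one of whose 3-element subsets receive color 1; there is no (2s₂−1)-element vertex set all of whose 3-element subsets receive color 2; there is no (2s₃−1)-element vertex set all of whose 3-element subsets receive color 3; there is no 5-element vertex set all of whose 3-element subsets receive color 4; and there is no (q+1)-element vertex set all but at most one of whose 3-element subsets receive color 5. Consequently, R(K_{2s₁−1}^{(3)} − e, K_{2s₂−1}^{(3)}, K_{2s₃−1}^{(3)}, K_5^{(3)}, K_{q+1}^{(3)} − e; 3) > q·(R(K_{s₁}, K_{s₂}, K_{s₃}; 2)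 − 1). -/
/-- The coloring `χ` of subsets of a `p`-element vertex set contains a
monochromatic complete `r`-uniform `K_m^{(r)}` in color `i`: an `m`-element
vertex set all of whose `r`-element subsets receive color `i`. -/
def HasMonoClique {C : Type} (p : ℕ) (χ : Finset (Fin p) → C) (r : ℕ)
    (i : C) (m : ℕ) : Prop :=
  ∃ S : Finset (Fin p), S.card = m ∧
    ∀ e : Finset (Fin p), e ⊆ S → e.card = r → χ e = i

/-- The coloring `ψ` of 3-element subsets contains a copy of `K_m^{(3)} - e` in
color `i`: an `m`-element vertex set all but at most one of whose 3-element
subsets receive color `i`. -/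
def HasCliqueMinusEdge {C : Type} [DecidableEq C] (p : ℕ)
    (ψ : Finset (Fin p) → C) (i : C) (m : ℕ) : Prop :=
  ∃ S : Finset (Fin p), S.card = m ∧
    ((S.powersetCard 3).filter (fun e => ψ e ≠ i)).card ≤ 1

/-- The graph Ramsey number `R(K_{s₁}, K_{s₂}, K_{s₃}; 2)`. -/
noncomputable def RGraph3 (s₁ s₂ s₃ : ℕ) : ℕ :=
  sInf {p | 0 < p ∧ ∀ χ : Finset (Fin p) → Fin 3,
    HasMonoClique p χ 2 0 s₁ ∨ HasMonoClique p χ 2 1 s₂ ∨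
      HasMonoClique p χ 2 2 s₃}

/-- The 5-color hypergraph Ramsey number
`R(K_{2s₁-1}^{(3)} - e, K_{2s₂-1}^{(3)}, K_{2s₃-1}^{(3)}, K_5^{(3)},
K_{q+1}^{(3)} - e; 3)`. -/
noncomputable def RHyp5 (s₁ s₂ s₃ q : ℕ) : ℕ :=
  sInf {p | 0 < p ∧ ∀ ψ : Finset (Fin p) → Fin 5,
    HasCliqueMinusEdge p ψ 0 (2 * s₁ - 1) ∨
      HasMonoClique p ψ 3 1 (2 * s₂ - 1) ∨
        HasMonoClique p ψ 3 2 (2 * s₃ - 1) ∨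
          HasMonoClique p ψ 3 3 5 ∨
            HasCliqueMinusEdge p ψ 4 (q + 1)}

/-!
Blow every point of the `p`-set up into a part of `q` vertices, indexed by coordinates in
`Fin q`, and colour a triple by how it meets the parts. A triple inside one part gets colour 4.
A triple meeting two parts `g, h` gets colour `χ {g, h}` if two of its vertices share a
coordinate, and colour 4 otherwise. A triple meeting three parts gets the majority of the colours
of its three pairs of parts: 0 if all three are 0, 1 or 2 if at least two pairs have that colour,
and 3 otherwise.

Any `q + 1` vertices contain two with the same coordinate, and no triple through these two has
colour 4. A set of colour `c ≤ 2` (for `c = 0`, up to one triple) meets each part at most twice,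
a part met twice is joined in colour `c` to all the other parts, and the pairs of parts of a colour
other than `c` form a matching. Dropping one end of each of these pairs leaves a `χ`-clique of
colour `c` on at least half as many parts as the set has vertices, i.e. on `s` parts when the set
has `2 s - 1` vertices. The vertices of a `K_5` of colour 3 lie in distinct parts, and a finite
check shows that no 3-colouring of `K_5` gives all ten triangles colour 3.

The bound on the Ramsey numbers follows by applying this construction to a colouring of
`RGraph3 s₁ s₂ s₃ - 1` points without the forbidden cliques.
-/

open Finset

theorem forall_subset_insert_of_link {α κ : Type*} [DecidableEq α] {f : Finset α → κ} {r : ℕ}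
    {c : κ} {v : α} {B B' : Finset α} (hB'B : B' ⊆ B)
    (hlink : ∀ e ⊆ B, #e = r → f (insert v e) = c) (hB' : ∀ e ⊆ B', #e = r + 1 → f e = c) :
    ∀ e ⊆ insert v B', #e = r + 1 → f e = c := by
  intro e he hcard
  by_cases hve : v ∈ e
  · rw [← insert_erase hve]
    refine hlink _ (fun x hx => ?_) (by rw [card_erase_of_mem hve, hcard]; rfl)
    exact hB'B ((mem_insert.mp (he (mem_of_mem_erase hx))).resolve_left (ne_of_mem_erase hx))
  · exact hB' e (fun x hx => (mem_insert.mp (he hx)).resolve_left fun h => hve (h ▸ hx)) hcard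

theorem exists_ramsey_bound {κ : Type*} [Fintype κ] (r : ℕ) (m : κ → ℕ) :
    ∃ N, ∀ {α : Type} [DecidableEq α] (A : Finset α) (f : Finset α → κ), N ≤ #A →
      ∃ c, ∃ B ⊆ A, m c ≤ #B ∧ ∀ e ⊆ B, #e = r → f e = c := by
  classical
  induction r generalizing m with
  | zero =>
    refine ⟨∑ c, m c, fun A f hA => ⟨f ∅, A, subset_rfl, ?_, fun e _ he => ?_⟩⟩
    · exact (single_le_sum (fun c _ => Nat.zero_le (m c)) (mem_univ _)).trans hA
    · rw [card_eq_zero.mp he]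
  | succ r ih =>
    induction m using WellFoundedLT.induction with
    | ind m ihm =>
    by_cases hm : ∃ c, m c = 0
    · obtain ⟨c, hc⟩ := hm
      refine ⟨0, fun A f _ => ⟨c, ∅, empty_subset A, by simp [hc], fun e he hcard => ?_⟩⟩
      simp [subset_empty.mp he] at hcard
    push Not at hm
    choose N hN using fun c => ihm (Function.update m c (m c - 1))
      (update_lt_self_iff.2 (by have := hm c; omega))
    obtain ⟨L, hL⟩ := ih N
    refine ⟨L + 1, fun A f hA => ?_⟩
    obtain ⟨v, hv⟩ : A.Nonempty := card_pos.mp (by omega)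
    obtain ⟨c, B, hBA, hNB, hlink⟩ :=
      hL (A.erase v) (fun e => f (insert v e)) (by rw [card_erase_of_mem hv]; omega)
    obtain ⟨c', B', hB'B, hmB', hB'⟩ := hN c B f hNB
    have hB'A : B' ⊆ A := (hB'B.trans hBA).trans (erase_subset v A)
    by_cases hcc : c' = c
    · subst hcc
      have hvB : v ∉ B := fun h => notMem_erase v A (hBA h)
      refine ⟨c', insert v B', insert_subset hv hB'A, ?_,
        forall_subset_insert_of_link hB'B hlink hB'⟩
      rw [card_insert_of_notMem fun h => hvB (hB'B h)]
      simp only [Function.update_self] at hmB'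
      omega
    · exact ⟨c', B', hB'A, by simpa [hcc] using hmB', hB'⟩

namespace HasMonoClique

variable {C : Type} {p r m : ℕ} {ψ : Finset (Fin p) → C} {c : C}

theorem of_pairwise {W : Finset (Fin p)} (hW : (W : Set (Fin p)).Pairwise fun a b => ψ {a, b} = c)
    (hm : m ≤ #W) : HasMonoClique p ψ 2 c m := by
  obtain ⟨T, hTW, hT⟩ := exists_subset_card_eq hm
  refine ⟨T, hT, fun e he he2 => ?_⟩
  obtain ⟨a, b, hab, rfl⟩ := card_eq_two.mp he2
  exact hW (hTW (he (by simp))) (hTW (he (by simp))) hab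

theorem of_le {M : ℕ} (h : HasMonoClique p ψ r c M) (hm : m ≤ M) : HasMonoClique p ψ r c m := by
  obtain ⟨S, hS, hmono⟩ := h
  obtain ⟨T, hTS, hT⟩ := exists_subset_card_eq (hS ▸ hm)
  exact ⟨T, hT, fun e he => hmono e (he.trans hTS)⟩

theorem hasCliqueMinusEdge [DecidableEq C] (h : HasMonoClique p ψ 3 c m) :
    HasCliqueMinusEdge p ψ c m := by
  obtain ⟨S, hS, hmono⟩ := h
  refine ⟨S, hS, ?_⟩
  rw [filter_false_of_mem fun e he => not_not.mpr (hmono e (mem_powersetCard.mp he).1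
    (mem_powersetCard.mp he).2)]
  simp

theorem of_comp_map {n : ℕ} (f : Fin n ↪ Fin p) (h : HasMonoClique n (fun e => ψ (e.map f)) r c m) :
    HasMonoClique p ψ r c m := by
  obtain ⟨S, hS, hmono⟩ := h
  refine ⟨S.map f, by rw [card_map, hS], fun e he he3 => ?_⟩
  obtain ⟨e', he', rfl⟩ := subset_map_iff.mp he
  exact hmono e' he' (by rwa [card_map] at he3)

end HasMonoClique

theorem HasCliqueMinusEdge.of_comp_map {C : Type} [DecidableEq C] {n p m : ℕ}
    {ψ : Finset (Fin p) → C} {c : C} (f : Fin n ↪ Fin p)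
    (h : HasCliqueMinusEdge n (fun e => ψ (e.map f)) c m) : HasCliqueMinusEdge p ψ c m := by
  obtain ⟨S, hS, hfew⟩ := h
  refine ⟨S.map f, by rw [card_map, hS], ?_⟩
  rwa [powersetCard_map, filter_map, card_map]

theorem exists_forall_hasMonoClique (κ : Type) [Fintype κ] (r M : ℕ) :
    ∃ n, 0 < n ∧ ∀ ψ : Finset (Fin n) → κ, ∃ c, HasMonoClique n ψ r c M := by
  obtain ⟨N, hN⟩ := exists_ramsey_bound r fun _ : κ => M
  refine ⟨N + 1, N.succ_pos, fun ψ => ?_⟩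
  obtain ⟨c, B, -, hB, hmono⟩ := hN univ ψ (by simp)
  exact ⟨c, HasMonoClique.of_le ⟨B, rfl, hmono⟩ hB⟩

def IsRHyp5Good (s₁ s₂ s₃ q n : ℕ) (ψ : Finset (Fin n) → Fin 5) : Prop :=
  ¬ HasCliqueMinusEdge n ψ 0 (2 * s₁ - 1) ∧
  ¬ HasMonoClique n ψ 3 1 (2 * s₂ - 1) ∧
  ¬ HasMonoClique n ψ 3 2 (2 * s₃ - 1) ∧
  ¬ HasMonoClique n ψ 3 3 5 ∧
  ¬ HasCliqueMinusEdge n ψ 4 (q + 1)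

theorem lt_RHyp5 {s₁ s₂ s₃ q n : ℕ} {ψ : Finset (Fin n) → Fin 5} (hψ : IsRHyp5Good s₁ s₂ s₃ q n ψ) :
    n < RHyp5 s₁ s₂ s₃ q := by
  -- `RHyp5` is an `sInf`, which would be `0` if no `N` worked: Ramsey's theorem provides one.
  obtain ⟨N, hN, hmono⟩ :=
    exists_forall_hasMonoClique (Fin 5) 3 (2 * s₁ + 2 * s₂ + 2 * s₃ + q + 5)
  obtain ⟨-, hall⟩ : RHyp5 s₁ s₂ s₃ q ∈ _ := Nat.sInf_mem ⟨N, hN, fun ψ => by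
    obtain ⟨c, hc⟩ := hmono ψ
    fin_cases c
    · exact Or.inl (hc.of_le (by omega)).hasCliqueMinusEdge
    · exact Or.inr (Or.inl (hc.of_le (by omega)))
    · exact Or.inr (Or.inr (Or.inl (hc.of_le (by omega))))
    · exact Or.inr (Or.inr (Or.inr (Or.inl (hc.of_le (by omega)))))
    · exact Or.inr (Or.inr (Or.inr (Or.inr (hc.of_le (by omega)).hasCliqueMinusEdge)))⟩
  by_contra! hle
  rcases hall fun e => ψ (e.map (Fin.castLEEmb hle)) with h | h | h | h | h
  exacts [hψ.1 (h.of_comp_map _), hψ.2.1 (h.of_comp_map _), hψ.2.2.1 (h.of_comp_map _),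
    hψ.2.2.2.1 (h.of_comp_map _), hψ.2.2.2.2 (h.of_comp_map _)]

theorem exists_coloring_of_lt_RGraph3 {s₁ s₂ s₃ n : ℕ} (hn : 0 < n) (h : n < RGraph3 s₁ s₂ s₃) :
    ∃ χ : Finset (Fin n) → Fin 3, ¬ HasMonoClique n χ 2 0 s₁ ∧ ¬ HasMonoClique n χ 2 1 s₂ ∧
      ¬ HasMonoClique n χ 2 2 s₃ := by
  have := Nat.notMem_of_lt_sInf h
  simp only [Set.mem_ofPred_eq, not_and, not_forall] at this
  obtain ⟨χ, hχ⟩ := this hn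
  exact ⟨χ, by tauto⟩

theorem SimpleGraph.exists_isIndepSet_card_add_card_le_two_mul {α : Type*} [LinearOrder α]
    (H : SimpleGraph α) (G D : Finset α) (hDG : D ⊆ G) (hD : ∀ d ∈ D, ∀ g ∈ G, ¬ H.Adj d g)
    (hdeg : ∀ g ∈ G, ∀ h₁ ∈ G, ∀ h₂ ∈ G, H.Adj g h₁ → H.Adj g h₂ → h₁ = h₂) :
    ∃ W ⊆ G, #G + #D ≤ 2 * #W ∧ H.IsIndepSet W := by
  classical
  -- keep the smaller end of every edge
  set W := {g ∈ G | ∀ h ∈ G, H.Adj g h → g < h}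
  have hWG : W ⊆ G := filter_subset _ _
  have hDW : D ⊆ W := fun d hd =>
    mem_filter.mpr ⟨hDG hd, fun h hh hadj => absurd hadj (hD d hd h hh)⟩
  have hout : #(G \ W) ≤ #(W \ D) := by
    refine card_le_card_of_forall_subsingleton (fun g h => H.Adj g h ∧ h < g) ?_ ?_
    · intro g hg
      obtain ⟨hgG, hgW⟩ := mem_sdiff.mp hg
      obtain ⟨h, hhG, hadj, hhg⟩ : ∃ h ∈ G, H.Adj g h ∧ h ≤ g := by
        simpa [W, hgG] using hgW
      have hlt : h < g := lt_of_le_of_ne hhg hadj.ne.symm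
      refine ⟨h, mem_sdiff.mpr ⟨mem_filter.mpr ⟨hhG, fun h' hh' hadj' => ?_⟩, fun hhD =>
        hD h hhD g hgG hadj.symm⟩, hadj, hlt⟩
      rwa [hdeg h hhG h' hh' g hgG hadj' hadj.symm]
    · intro h hh g₁ hg₁ g₂ hg₂
      exact hdeg h (hWG (mem_sdiff.mp hh).1) g₁ (mem_sdiff.mp hg₁.1).1 g₂ (mem_sdiff.mp hg₂.1).1
        hg₁.2.1.symm hg₂.2.1.symm
  refine ⟨W, hWG, ?_, ?_⟩
  · rw [card_sdiff_of_subset hWG, card_sdiff_of_subset hDW] at hout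
    have := card_le_card hWG
    have := card_le_card hDW
    omega
  · intro a ha b hb hab hadj
    exact lt_asymm ((mem_filter.mp ha).2 b (hWG hb) hadj)
      ((mem_filter.mp hb).2 a (hWG ha) hadj.symm)

theorem exists_pairwise_eq_of_matching {P C : Type*} [LinearOrder P] [DecidableEq P]
    {χ : Finset P → C} {c : C} (G D : Finset P) (hDG : D ⊆ G)
    (hD : ∀ d ∈ D, ∀ g ∈ G, d ≠ g → χ {d, g} = c)
    (hmatch : ∀ g ∈ G, ∀ h₁ ∈ G, ∀ h₂ ∈ G, g ≠ h₁ → g ≠ h₂ → χ {g, h₁} ≠ c → χ {g, h₂} ≠ c →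
      h₁ = h₂) :
    ∃ W ⊆ G, #G + #D ≤ 2 * #W ∧ (W : Set P).Pairwise fun a b => χ {a, b} = c := by
  set H := SimpleGraph.fromRel fun a b : P => χ {a, b} ≠ c
  have hadj : ∀ a b, H.Adj a b ↔ a ≠ b ∧ χ {a, b} ≠ c := by
    intro a b
    rw [SimpleGraph.fromRel_adj, pair_comm b a, or_self]
  obtain ⟨W, hWG, hcard, hW⟩ := H.exists_isIndepSet_card_add_card_le_two_mul G D hDG
    (fun d hd g hg hdg => ((hadj d g).mp hdg).2 (hD d hd g hg ((hadj d g).mp hdg).1))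
    (fun g hg h₁ hh₁ h₂ hh₂ hadj₁ hadj₂ => hmatch g hg h₁ hh₁ h₂ hh₂ ((hadj g h₁).mp hadj₁).1
      ((hadj g h₂).mp hadj₂).1 ((hadj g h₁).mp hadj₁).2 ((hadj g h₂).mp hadj₂).2)
  exact ⟨W, hWG, hcard, fun a ha b hb hab =>
    not_not.mp fun h => hW ha hb hab ((hadj a b).mpr ⟨hab, h⟩)⟩

theorem card_le_card_image_add_card_filter {α β : Type*} [DecidableEq β] (f : α → β) (S : Finset α)
    (h2 : ∀ b, #{a ∈ S | f a = b} ≤ 2) :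
    #S ≤ #(S.image f) + #{b ∈ S.image f | 2 ≤ #{a ∈ S | f a = b}} := by
  rw [card_eq_sum_card_image f S, card_filter, card_eq_sum_ones (S.image f), ← sum_add_distrib]
  refine sum_le_sum fun b _ => ?_
  have := h2 b
  split_ifs <;> omega

theorem apply_triple_eq {α β : Type*} [DecidableEq α] {f : Finset α → β} {b : β} {S : Finset α}
    (hS : ∀ e ⊆ S, #e = 3 → f e = b) {x y z : α} (hx : x ∈ S) (hy : y ∈ S) (hz : z ∈ S)
    (hxy : x ≠ y) (hxz : x ≠ z) (hyz : y ≠ z) : f {x, y, z} = b :=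
  hS _ (by simp [insert_subset_iff, *]) (card_eq_three.mpr ⟨x, y, z, hxy, hxz, hyz, rfl⟩)

theorem eq_or_eq_of_card_filter_ne_le_one {α C : Type*} [DecidableEq α] [DecidableEq C]
    {ψ : Finset α → C} {i : C} {S : Finset α} (hS : #{e ∈ S.powersetCard 3 | ψ e ≠ i} ≤ 1)
    {x y u w : α} (hx : x ∈ S) (hy : y ∈ S) (hxy : x ≠ y) (hu : u ∈ S \ {x, y})
    (hw : w ∈ S \ {x, y}) (huw : u ≠ w) : ψ {x, y, u} = i ∨ ψ {x, y, w} = i := by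
  simp only [mem_sdiff, mem_insert, mem_singleton, not_or] at hu hw
  by_contra! h
  have hmem : ∀ z ∈ S, z ≠ x → z ≠ y → ψ {x, y, z} ≠ i →
      {x, y, z} ∈ {e ∈ S.powersetCard 3 | ψ e ≠ i} := by
    intro z hz hzx hzy hψ
    refine mem_filter.mpr ⟨mem_powersetCard.mpr ⟨?_, ?_⟩, hψ⟩
    · simp [insert_subset_iff, hx, hy, hz]
    · rw [card_insert_of_notMem (by simp [hxy, hzx.symm]), card_pair hzy.symm]
  have := card_le_one.mp hS _ (hmem u hu.1 hu.2.1 hu.2.2 h.1) _ (hmem w hw.1 hw.2.1 hw.2.2 h.2)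
  have hu' : u ∈ ({x, y, w} : Finset α) := this ▸ by simp
  simp [hu.2.1, hu.2.2, huw] at hu'

def triangleColor (m : Multiset (Fin 3)) : Fin 5 :=
  if m.count 0 = 3 then 0 else if 2 ≤ m.count 1 then 1 else if 2 ≤ m.count 2 then 2 else 3

theorem triangleColor_ne_four (m : Multiset (Fin 3)) : triangleColor m ≠ 4 := by
  unfold triangleColor; split_ifs <;> decide

theorem triangleColor_eq_zero {u v w : Fin 3} (h : triangleColor {u, v, w} = 0) :
    u = 0 ∧ v = 0 ∧ w = 0 := by
  revert u v w; decide

theorem triangleColor_ne_castLE {c u v w : Fin 3} (hu : u ≠ c) (hv : v ≠ c) :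
    triangleColor {u, v, w} ≠ Fin.castLE (by decide) c := by
  revert c u v w; decide

theorem castLE_ne_three (c : Fin 3) : (Fin.castLE (by decide) c : Fin 5) ≠ 3 := by
  revert c; decide

theorem castLE_ne_four (c : Fin 3) : (Fin.castLE (by decide) c : Fin 5) ≠ 4 := by
  revert c; decide

-- The binders are interleaved with the hypotheses so that `decide` prunes early.
set_option synthInstance.maxSize 2000 in
theorem triangleColor_K5_ne_three : ∀ c01 c02 c12 : Fin 3, triangleColor {c01, c02, c12} = 3 →
    ∀ c03 c13 c23 : Fin 3, triangleColor {c01, c03, c13} = 3 → triangleColor {c02, c03, c23} = 3 →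
    triangleColor {c12, c13, c23} = 3 →
    ∀ c04 c14 c24 c34 : Fin 3, triangleColor {c01, c04, c14} = 3 →
    triangleColor {c02, c04, c24} = 3 → triangleColor {c03, c04, c34} = 3 →
    triangleColor {c12, c14, c24} = 3 → triangleColor {c13, c14, c34} = 3 →
    triangleColor {c23, c24, c34} ≠ 3 := by
  decide

theorem not_forall_triangleColor_eq_three (c : Fin 5 → Fin 5 → Fin 3) :
    ¬ ∀ i j k, i < j → j < k → triangleColor {c i j, c i k, c j k} = 3 := fun h =>
  triangleColor_K5_ne_three _ _ _ (h 0 1 2 (by decide) (by decide)) _ _ _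
    (h 0 1 3 (by decide) (by decide)) (h 0 2 3 (by decide) (by decide))
    (h 1 2 3 (by decide) (by decide)) _ _ _ _ (h 0 1 4 (by decide) (by decide))
    (h 0 2 4 (by decide) (by decide)) (h 0 3 4 (by decide) (by decide))
    (h 1 2 4 (by decide) (by decide)) (h 1 3 4 (by decide) (by decide))
    (h 2 3 4 (by decide) (by decide))

section Lift

variable {V P K : Type*} [DecidableEq V] [DecidableEq P] [DecidableEq K]

-- On a triple `e` meeting three parts, `(e.erase v).image part` is the pair of parts opposite `v`.
def liftColoring (part : V → P) (coord : V → K) (χ : Finset P → Fin 3) (e : Finset V) : Fin 5 :=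
  if #(e.image part) = 3 then triangleColor (e.val.map fun v => χ ((e.erase v).image part))
  else if ∃ u ∈ e, ∃ v ∈ e, u ≠ v ∧ coord u = coord v then Fin.castLE (by decide) (χ (e.image part))
  else 4

variable {part : V → P} {coord : V → K} (χ : Finset P → Fin 3)

theorem liftColoring_of_three_parts {x y z : V}
    (hxy : part x ≠ part y) (hxz : part x ≠ part z) (hyz : part y ≠ part z) :
    liftColoring part coord χ {x, y, z} =
      triangleColor {χ {part x, part y}, χ {part x, part z}, χ {part y, part z}} := by
  have hxy' : x ≠ y := ne_of_apply_ne part hxy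
  have hxz' : x ≠ z := ne_of_apply_ne part hxz
  have hyz' : y ≠ z := ne_of_apply_ne part hyz
  rw [liftColoring, if_pos (by simp [card_insert_of_notMem, *])]
  rw [insert_val_of_notMem (by simp [hxy', hxz']), insert_val_of_notMem (by simp [hyz'])]
  simp only [singleton_val, Multiset.map_cons, erase_insert_eq_erase, mem_insert, mem_singleton,
    hxy', hxz', hyz', or_self, not_false_eq_true, erase_eq_of_notMem, image_insert,
    image_singleton, ne_eq, erase_insert_of_ne, Multiset.map_singleton, erase_singleton,
    insert_empty_eq, Multiset.insert_eq_cons]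
  congr 1
  simp only [← Multiset.singleton_add]
  abel

theorem liftColoring_of_part_eq (hinj : ∀ u v, part u = part v → coord u = coord v → u = v)
    {x y z : V} (hxy : part x = part y) (hxz : part x = part z) :
    liftColoring part coord χ {x, y, z} = 4 := by
  have hpart : ∀ u ∈ ({x, y, z} : Finset V), part u = part x := by simp [← hxy, ← hxz]
  rw [liftColoring, if_neg, if_neg]
  · rintro ⟨u, hu, v, hv, huv, hc⟩
    exact huv (hinj u v ((hpart u hu).trans (hpart v hv).symm) hc)
  · have : ({x, y, z} : Finset V).image part = {part x} := by simp [← hxy, ← hxz]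
    simp [this]

theorem liftColoring_of_two_parts (hinj : ∀ u v, part u = part v → coord u = coord v → u = v)
    {x y z : V} (hxy : x ≠ y) (hpxy : part x = part y) (hpxz : part x ≠ part z) :
    liftColoring part coord χ {x, y, z} =
      if coord z = coord x ∨ coord z = coord y then Fin.castLE (by decide) (χ {part x, part z})
      else 4 := by
  have hcxy : coord x ≠ coord y := fun h => hxy (hinj x y hpxy h)
  have himage : ({x, y, z} : Finset V).image part = {part x, part z} := by
    simp [hpxy]
  rw [liftColoring, himage, if_neg (by simp [card_pair hpxz])]
  congr 1
  simp only [mem_insert, mem_singleton, exists_eq_or_imp, exists_eq_left]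
  grind

theorem liftColoring_ne_four_of_coord_eq {x y z : V} (hxy : x ≠ y) (hc : coord x = coord y) :
    liftColoring part coord χ {x, y, z} ≠ 4 := by
  unfold liftColoring
  split_ifs with h3 hex
  · exact triangleColor_ne_four _
  · exact castLE_ne_four _
  · exact absurd ⟨x, by simp, y, by simp, hxy, hc⟩ hex

theorem exists_pairwise_of_forall_liftColoring_eq [LinearOrder P]
    (hinj : ∀ u v, part u = part v → coord u = coord v → u = v) (c : Fin 3) (S : Finset V)
    (hS : ∀ e ⊆ S, #e = 3 → liftColoring part coord χ e = Fin.castLE (by decide) c) :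
    ∃ W ⊆ S.image part, #S ≤ 2 * #W ∧ (W : Set P).Pairwise fun a b => χ {a, b} = c := by
  have hfib : ∀ g, #{v ∈ S | part v = g} ≤ 2 := by
    intro g
    by_contra! h
    obtain ⟨x, hx, y, hy, z, hz, hxy, hxz, hyz⟩ := two_lt_card.mp h
    simp only [mem_filter] at hx hy hz
    have := apply_triple_eq hS hx.1 hy.1 hz.1 hxy hxz hyz
    rw [liftColoring_of_part_eq χ hinj (hx.2.trans hy.2.symm) (hx.2.trans hz.2.symm)] at this
    exact castLE_ne_four c this.symm
  have hdouble : ∀ g ∈ S.image part, 2 ≤ #{v ∈ S | part v = g} →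
      ∀ h ∈ S.image part, g ≠ h → χ {g, h} = c := by
    intro g _ h2 h hh hgh
    obtain ⟨x, hx, y, hy, hxy⟩ := one_lt_card.mp h2
    obtain ⟨z, hz, rfl⟩ := mem_image.mp hh
    simp only [mem_filter] at hx hy
    have := apply_triple_eq hS hx.1 hy.1 hz hxy (by rintro rfl; exact hgh hx.2.symm)
      (by rintro rfl; exact hgh hy.2.symm)
    rw [liftColoring_of_two_parts χ hinj hxy (hx.2.trans hy.2.symm) (by rw [hx.2]; exact hgh),
      hx.2] at this
    split_ifs at this
    · exact Fin.castLE_injective _ this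
    · exact absurd this.symm (castLE_ne_four c)
  have hmatch : ∀ g ∈ S.image part, ∀ h₁ ∈ S.image part, ∀ h₂ ∈ S.image part,
      g ≠ h₁ → g ≠ h₂ → χ {g, h₁} ≠ c → χ {g, h₂} ≠ c → h₁ = h₂ := by
    intro g hg h₁ hh₁ h₂ hh₂ hgh₁ hgh₂ hc₁ hc₂
    by_contra hne
    obtain ⟨x, hx, rfl⟩ := mem_image.mp hg
    obtain ⟨y, hy, rfl⟩ := mem_image.mp hh₁
    obtain ⟨z, hz, rfl⟩ := mem_image.mp hh₂
    have := apply_triple_eq hS hx hy hz (ne_of_apply_ne part hgh₁) (ne_of_apply_ne part hgh₂)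
      (ne_of_apply_ne part hne)
    rw [liftColoring_of_three_parts χ hgh₁ hgh₂ hne] at this
    exact triangleColor_ne_castLE hc₁ hc₂ this
  obtain ⟨W, hWG, hcard, hW⟩ := exists_pairwise_eq_of_matching (S.image part)
    {g ∈ S.image part | 2 ≤ #{v ∈ S | part v = g}} (filter_subset _ _)
    (fun d hd => hdouble d (mem_filter.mp hd).1 (mem_filter.mp hd).2) hmatch
  exact ⟨W, hWG, (card_le_card_image_add_card_filter part S hfib).trans hcard, hW⟩

theorem card_filter_part_eq_le_two (hinj : ∀ u v, part u = part v → coord u = coord v → u = v)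
    (S : Finset V) (h4 : 4 ≤ #S)
    (hS : #{e ∈ S.powersetCard 3 | liftColoring part coord χ e ≠ 0} ≤ 1) (g : P) :
    #{v ∈ S | part v = g} ≤ 2 := by
  by_contra! h
  obtain ⟨x, hx, y, hy, z, hz, hxy, hxz, hyz⟩ := two_lt_card.mp h
  simp only [mem_filter] at hx hy hz
  obtain ⟨w, hw⟩ : (S \ {x, y, z}).Nonempty := by
    rw [← card_pos]
    have := le_card_sdiff {x, y, z} S
    have := card_le_three (a := x) (b := y) (c := z)
    omega
  simp only [mem_sdiff, mem_insert, mem_singleton, not_or] at hw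
  have hT : ∀ a ∈ ({x, y, z} : Finset V), a ∈ S ∧ part a = g ∧ w ≠ a := by
    simp only [mem_insert, mem_singleton, forall_eq_or_imp, forall_eq]
    exact ⟨⟨hx.1, hx.2, hw.2.1⟩, ⟨hy.1, hy.2, hw.2.2.1⟩, ⟨hz.1, hz.2, hw.2.2.2⟩⟩
  -- `{a, b, t}` has colour 4, and so has `{a, b, w}` unless `w` shares a coordinate with `a` or `b`
  have key : ∀ a ∈ ({x, y, z} : Finset V), ∀ b ∈ ({x, y, z} : Finset V),
      ∀ t ∈ ({x, y, z} : Finset V), a ≠ b → a ≠ t → b ≠ t →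
      coord w ≠ coord a → coord w ≠ coord b → False := by
    intro a ha b hb t ht hab hat hbt hca hcb
    obtain ⟨haS, hag, hwa⟩ := hT a ha
    obtain ⟨hbS, hbg, hwb⟩ := hT b hb
    obtain ⟨htS, htg, hwt⟩ := hT t ht
    rcases eq_or_eq_of_card_filter_ne_le_one hS haS hbS hab (u := t) (w := w)
      (by simp [htS, hat.symm, hbt.symm]) (by simp [hw.1, hwa, hwb]) hwt.symm with h | h
    · rw [liftColoring_of_part_eq χ hinj (hag.trans hbg.symm) (hag.trans htg.symm)] at h
      exact absurd h (by decide)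
    · by_cases hwg : part w = g
      · rw [liftColoring_of_part_eq χ hinj (hag.trans hbg.symm) (hag.trans hwg.symm)] at h
        exact absurd h (by decide)
      · rw [liftColoring_of_two_parts χ hinj hab (hag.trans hbg.symm) (hag ▸ Ne.symm hwg),
          if_neg (by tauto)] at h
        exact absurd h (by decide)
  have hc : ∀ a b, part a = g → part b = g → a ≠ b → coord a ≠ coord b := fun a b ha hb hab hc =>
    hab (hinj a b (ha.trans hb.symm) hc)
  by_cases hcx : coord w = coord x
  · exact key y (by simp) z (by simp) x (by simp) hyz hxy.symm hxz.symm
      (hcx ▸ hc x y hx.2 hy.2 hxy) (hcx ▸ hc x z hx.2 hz.2 hxz)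
  by_cases hcy : coord w = coord y
  · exact key x (by simp) z (by simp) y (by simp) hxz hxy hyz.symm hcx (hcy ▸ hc y z hy.2 hz.2 hyz)
  · exact key x (by simp) y (by simp) z (by simp) hxy hxz hyz hcx hcy

theorem pairwise_zero_of_card_filter_ne_zero_le_one
    (hinj : ∀ u v, part u = part v → coord u = coord v → u = v) (S : Finset V) (h5 : 5 ≤ #S)
    (hS : #{e ∈ S.powersetCard 3 | liftColoring part coord χ e ≠ 0} ≤ 1) :
    (S.image part : Set P).Pairwise fun a b => χ {a, b} = 0 := by
  intro a ha b hb hab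
  obtain ⟨xa, hxa, rfl⟩ := mem_image.mp ha
  obtain ⟨xb, hxb, rfl⟩ := mem_image.mp hb
  have hzero : ∀ {x y z : V}, part x ≠ part y → part x ≠ part z → part y ≠ part z →
      liftColoring part coord χ {x, y, z} = 0 →
        χ {part x, part y} = 0 ∧ χ {part x, part z} = 0 ∧ χ {part y, part z} = 0 :=
    fun hxy hxz hyz h =>
      triangleColor_eq_zero (liftColoring_of_three_parts χ (coord := coord) hxy hxz hyz ▸ h)
  set Out := {v ∈ S | part v ≠ part xa ∧ part v ≠ part xb}
  by_cases hOut : 1 < #Out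
  · obtain ⟨w₁, hw₁, w₂, hw₂, hw₁₂⟩ := one_lt_card.mp hOut
    simp only [Out, mem_filter] at hw₁ hw₂
    rcases eq_or_eq_of_card_filter_ne_le_one hS hxa hxb (ne_of_apply_ne part hab) (u := w₁)
      (w := w₂) (by simp [hw₁.1]; grind) (by simp [hw₂.1]; grind) hw₁₂ with h | h
    · exact (hzero hab (Ne.symm hw₁.2.1) (Ne.symm hw₁.2.2) h).1
    · exact (hzero hab (Ne.symm hw₂.2.1) (Ne.symm hw₂.2.2) h).1
  -- otherwise the part of `xa` contains a second vertex and `Out` a single one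
  have hcover : S ⊆ {v ∈ S | part v = part xa} ∪ {v ∈ S | part v = part xb} ∪ Out := by
    intro v hv
    simp only [Out, mem_union, mem_filter]
    tauto
  have hfib := card_filter_part_eq_le_two χ hinj S (by omega) hS
  have := (card_le_card hcover).trans ((card_union_le _ _).trans
    (Nat.add_le_add_right (card_union_le _ _) _))
  have := hfib (part xa)
  have := hfib (part xb)
  obtain ⟨x₁, hx₁, x₂, hx₂, hx₁₂⟩ := one_lt_card.mp (show 1 < #{v ∈ S | part v = part xa} by omega)
  obtain ⟨w, hw⟩ := card_pos.mp (show 0 < #Out by omega)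
  simp only [Out, mem_filter] at hx₁ hx₂ hw
  rcases eq_or_eq_of_card_filter_ne_le_one hS hxb hw.1 (by grind) (u := x₁) (w := x₂)
    (by simp [hx₁.1]; grind) (by simp [hx₂.1]; grind) hx₁₂ with h | h
  · rw [pair_comm, ← hx₁.2]
    exact (hzero (Ne.symm hw.2.2) (by grind) (by grind) h).2.1
  · rw [pair_comm, ← hx₂.2]
    exact (hzero (Ne.symm hw.2.2) (by grind) (by grind) h).2.1

theorem not_forall_liftColoring_eq_three (hinj : ∀ u v, part u = part v → coord u = coord v → u = v)
    (S : Finset V) (hS5 : #S = 5) : ¬ ∀ e ⊆ S, #e = 3 → liftColoring part coord χ e = 3 := by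
  intro hS
  have hpart : ∀ x ∈ S, ∀ y ∈ S, x ≠ y → part x ≠ part y := by
    intro x hx y hy hxy hp
    obtain ⟨z, hz⟩ : (S \ {x, y}).Nonempty := by
      rw [← card_pos]
      have := le_card_sdiff {x, y} S
      have := card_le_two (a := x) (b := y)
      omega
    simp only [mem_sdiff, mem_insert, mem_singleton, not_or] at hz
    have := apply_triple_eq hS hx hy hz.1 hxy (Ne.symm hz.2.1) (Ne.symm hz.2.2)
    by_cases hpz : part x = part z
    · rw [liftColoring_of_part_eq χ hinj hp hpz] at this
      exact absurd this (by decide)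
    · rw [liftColoring_of_two_parts χ hinj hxy hp hpz] at this
      split_ifs at this
      · exact castLE_ne_three _ this
      · exact absurd this (by decide)
  set v : Fin 5 → V := fun i => ((S.equivFinOfCardEq hS5).symm i : V)
  have hv : ∀ i, v i ∈ S := fun i => ((S.equivFinOfCardEq hS5).symm i).2
  have hvinj : Function.Injective v := Subtype.val_injective.comp (Equiv.injective _)
  refine not_forall_triangleColor_eq_three (fun i j => χ {part (v i), part (v j)})
    fun i j k hij hjk => ?_
  have hne : ∀ {i j}, i ≠ j → v i ≠ v j := fun h => hvinj.ne h
  rw [← liftColoring_of_three_parts χ (coord := coord)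
    (hpart _ (hv i) _ (hv j) (hne hij.ne)) (hpart _ (hv i) _ (hv k) (hne (hij.trans hjk).ne))
    (hpart _ (hv j) _ (hv k) (hne hjk.ne))]
  exact apply_triple_eq hS (hv i) (hv j) (hv k) (hne hij.ne) (hne (hij.trans hjk).ne) (hne hjk.ne)

theorem not_card_filter_liftColoring_ne_four_le_one [Fintype K] (S : Finset V)
    (hK : Fintype.card K < #S) (h4 : 4 ≤ #S) :
    ¬ #{e ∈ S.powersetCard 3 | liftColoring part coord χ e ≠ 4} ≤ 1 := by
  intro hS
  obtain ⟨x, hx, y, hy, hxy, hc⟩ := exists_ne_map_eq_of_card_lt_of_maps_to (t := univ)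
    (by simpa using hK) (f := coord) (fun _ _ => mem_coe.mpr (mem_univ _))
  obtain ⟨u, hu, w, hw, huw⟩ := one_lt_card.mp (show 1 < #(S \ {x, y}) by
    have := le_card_sdiff {x, y} S
    have := card_le_two (a := x) (b := y)
    omega)
  rcases eq_or_eq_of_card_filter_ne_le_one hS hx hy hxy hu hw huw with h | h <;>
    exact liftColoring_ne_four_of_coord_eq χ hxy hc h

end Lift

theorem exists_isRHyp5Good_lift {s₁ s₂ s₃ q p : ℕ} (hq : 3 ≤ q) (hs₁ : 3 ≤ s₁)
    (χ : Finset (Fin p) → Fin 3)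
    (hχ₁ : ¬ HasMonoClique p χ 2 0 s₁) (hχ₂ : ¬ HasMonoClique p χ 2 1 s₂)
    (hχ₃ : ¬ HasMonoClique p χ 2 2 s₃) :
    ∃ ψ : Finset (Fin (q * p)) → Fin 5, IsRHyp5Good s₁ s₂ s₃ q (q * p) ψ := by
  set part : Fin (q * p) → Fin p := fun v => (finProdFinEquiv.symm v).2
  set coord : Fin (q * p) → Fin q := fun v => (finProdFinEquiv.symm v).1
  have hinj : ∀ u v, part u = part v → coord u = coord v → u = v := fun u v hp hc =>
    finProdFinEquiv.symm.injective (Prod.ext hc hp)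
  refine ⟨liftColoring part coord χ, ?_, ?_, ?_, ?_, ?_⟩
  · rintro ⟨S, hS, hfew⟩
    have hfib := card_filter_part_eq_le_two χ hinj S (by omega) hfew
    have := card_le_mul_card_image S 2 fun g _ => hfib g
    exact hχ₁ (HasMonoClique.of_pairwise
      (pairwise_zero_of_card_filter_ne_zero_le_one χ hinj S (by omega) hfew) (by omega))
  · rintro ⟨S, hS, hmono⟩
    obtain ⟨W, -, hW, hpair⟩ := exists_pairwise_of_forall_liftColoring_eq χ hinj 1 S hmono
    exact hχ₂ (HasMonoClique.of_pairwise hpair (by omega))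
  · rintro ⟨S, hS, hmono⟩
    obtain ⟨W, -, hW, hpair⟩ := exists_pairwise_of_forall_liftColoring_eq χ hinj 2 S hmono
    exact hχ₃ (HasMonoClique.of_pairwise hpair (by omega))
  · rintro ⟨S, hS, hmono⟩
    exact not_forall_liftColoring_eq_three χ hinj S hS hmono
  · rintro ⟨S, hS, hfew⟩
    exact not_card_filter_liftColoring_ne_four_le_one χ S (by simp [hS]) (by omega) hfew

theorem five_color_lift_general (q s₁ s₂ s₃ p : ℕ) (hq : 3 ≤ q)
    (hs₁ : 3 ≤ s₁)
    (χ : Finset (Fin p) → Fin 3)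
    (hχ₁ : ¬ HasMonoClique p χ 2 0 s₁)
    (hχ₂ : ¬ HasMonoClique p χ 2 1 s₂)
    (hχ₃ : ¬ HasMonoClique p χ 2 2 s₃) :
    (∃ ψ : Finset (Fin (q * p)) → Fin 5,
      ¬ HasCliqueMinusEdge (q * p) ψ 0 (2 * s₁ - 1) ∧
      ¬ HasMonoClique (q * p) ψ 3 1 (2 * s₂ - 1) ∧
      ¬ HasMonoClique (q * p) ψ 3 2 (2 * s₃ - 1) ∧
      ¬ HasMonoClique (q * p) ψ 3 3 5 ∧
      ¬ HasCliqueMinusEdge (q * p) ψ 4 (q + 1)) ∧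
    q * (RGraph3 s₁ s₂ s₃ - 1) < RHyp5 s₁ s₂ s₃ q := by
  obtain ⟨ψ, hψ⟩ := exists_isRHyp5Good_lift hq hs₁ χ hχ₁ hχ₂ hχ₃
  refine ⟨⟨ψ, hψ⟩, ?_⟩
  rcases Nat.lt_or_ge (RGraph3 s₁ s₂ s₃) 2 with hR | hR
  · rw [Nat.sub_eq_zero_of_le (by omega), mul_zero]
    exact (Nat.zero_le _).trans_lt (lt_RHyp5 hψ)
  · obtain ⟨χ', hχ'₁, hχ'₂, hχ'₃⟩ :=
      exists_coloring_of_lt_RGraph3 (s₁ := s₁) (s₂ := s₂) (s₃ := s₃)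
        (n := RGraph3 s₁ s₂ s₃ - 1) (by omega) (by omega)
    obtain ⟨ψ', hψ'⟩ := exists_isRHyp5Good_lift hq hs₁ χ' hχ'₁ hχ'₂ hχ'₃
    exact lt_RHyp5 hψ'

/-- from a 3-coloring of the pairs of a `p`-element set with no
monochromatic `K_{s_i}` in color `i`, one gets a 5-coloring of the triples of a
`q·p`-element set avoiding `K_{2s₁-1}^{(3)} - e` in color 1, monochromatic
`K_{2s₂-1}^{(3)}`, `K_{2s₃-1}^{(3)}` in colors 2, 3, a monochromatic
`K_5^{(3)}` in color 4, and `K_{q+1}^{(3)} - e` in color 5; consequently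
`R(K_{2s₁-1}^{(3)}-e, K_{2s₂-1}^{(3)}, K_{2s₃-1}^{(3)}, K_5^{(3)},
K_{q+1}^{(3)}-e; 3) > q (R(K_{s₁}, K_{s₂}, K_{s₃}; 2) - 1)`. -/
theorem five_color_lift (q s₁ s₂ s₃ p : ℕ) (hq : 3 ≤ q)
    (hs₁ : 3 ≤ s₁) (hs₂ : 3 ≤ s₂) (hs₃ : 3 ≤ s₃) (hp : 3 ≤ p)
    (χ : Finset (Fin p) → Fin 3)
    (hχ₁ : ¬ HasMonoClique p χ 2 0 s₁)
    (hχ₂ : ¬ HasMonoClique p χ 2 1 s₂)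
    (hχ₃ : ¬ HasMonoClique p χ 2 2 s₃) :
    (∃ ψ : Finset (Fin (q * p)) → Fin 5,
      ¬ HasCliqueMinusEdge (q * p) ψ 0 (2 * s₁ - 1) ∧
      ¬ HasMonoClique (q * p) ψ 3 1 (2 * s₂ - 1) ∧
      ¬ HasMonoClique (q * p) ψ 3 2 (2 * s₃ - 1) ∧
      ¬ HasMonoClique (q * p) ψ 3 3 5 ∧
      ¬ HasCliqueMinusEdge (q * p) ψ 4 (q + 1)) ∧
    q * (RGraph3 s₁ s₂ s₃ - 1) < RHyp5 s₁ s₂ s₃ q :=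
  five_color_lift_general q s₁ s₂ s₃ p hq hs₁ χ hχ₁ hχ₂ hχ₃
end
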